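/- Let K ≤ F_d with rad(K) ≥ n, let μ be a symmetric, adapted probability measure on F_d with finite first moment, and let Z_t = K X_t where (X_t) is the μ-random walk. Then for every r ≤ n and every integer m ≥ 0: Σ_{t≥m} P[pref_r(Z_t) ≠ pref_r(Z_{t+1})] ≤ |B_r| · Σ_{u∈F_d} μ(u)·|u|· g_K^{m+}(K, B(K, r+|u|)), where B_r is the ball of radius r in F_d and B(K,ρ) is the ball of radius ρ about the root in Sch(K). -/

import Mathlib

/-!
If a step `u` takes `Kx` to `Kxu` while `|Kx| > r + |u|`, then a geodesic path for `u` from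
`Kx` to `Kxu` stays outside the `r`-ball of the Schreier graph (triangle inequality), and so
does the reverse path. Prolonging paths to the root by these detours shows that a vertex of
the `r`-ball lies on every path from `Kx` to the root iff it lies on every path from `Kxu`;
hence `pref_r(Kx) = pref_r(Kxu)`. So a prefix change forces `u ≠ 1` and `|Kx| ≤ r + |u|`,
i.e. the indicator of a change is at most `|u| ⬝ 1[Kx ∈ B(K, r + |u|)]`; summing over
`t, x, u` gives the Green function sum, and `|B_r| ≥ 1`.
-/

open Filter MeasureTheory
open scoped ENNReal Topology

noncomputable section

namespace Paper

variable {G : Type*} [Group G]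

/-- A probability measure on a group is symmetric if `μ(x⁻¹) = μ(x)`. -/
def IsSymmetric (μ : PMF G) : Prop := ∀ x : G, μ x⁻¹ = μ x

/-- A probability measure on a group is adapted if its support generates the group. -/
def IsAdapted (μ : PMF G) : Prop := Subgroup.closure μ.support = ⊤

/-- Convolution of two probability measures on a group. -/
def conv (μ ν : PMF G) : PMF G := μ.bind fun x => ν.map fun y => x * y

/-- `iterConv μ t` is the `t`-fold convolution `μ^{*t}`, with `μ^{*0} = δ_1`. -/
def iterConv (μ : PMF G) : ℕ → PMF G
  | 0 => PMF.pure 1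
  | t + 1 => conv (iterConv μ t) μ

/-- Shannon entropy `H(p) = -∑ p(a) log p(a)`. -/
def pmfEntropy {α : Type*} (p : PMF α) : ℝ := ∑' a, Real.negMulLog ((p a).toReal)

/-- A probability measure has finite (Shannon) entropy when the defining series
converges. -/
def FiniteEntropy {α : Type*} (p : PMF α) : Prop :=
  Summable fun a => Real.negMulLog ((p a).toReal)

/-- The random walk entropy `h(G,μ) = lim_t H(μ^{*t})/t`. -/
def rwEntropy (μ : PMF G) : ℝ :=
  limUnder atTop fun t : ℕ => pmfEntropy (iterConv μ t) / t

/-- Word length of `x` with respect to a generating set `S`. -/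
def wordLength (S : Set G) (x : G) : ℕ :=
  sInf {n | ∃ l : List G, l.length = n ∧ (∀ a ∈ l, a ∈ S) ∧ l.prod = x}

/-- `μ` has finite `k`-th moment w.r.t. the generating set `S`. -/
def FiniteMoment (S : Set G) (μ : PMF G) (k : ℕ) : Prop :=
  Summable fun x : G => (μ x).toReal * (wordLength S x : ℝ) ^ k

/-- The space `K\G` of right cosets `Kg`. -/
abbrev RightCoset (K : Subgroup G) := Quotient (QuotientGroup.rightRel K)

/-- The right coset `Kg`. -/
def rcMk (K : Subgroup G) (g : G) : RightCoset K :=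
  Quotient.mk (QuotientGroup.rightRel K) g

/-- Shannon entropy of the pushforward of `p` under `x ↦ Kx`. -/
def cosetEntropy (K : Subgroup G) (p : PMF G) : ℝ := pmfEntropy (p.map (rcMk K))

/-- The random walk entropy `h(G/N, μ̄)` of the quotient walk,
expressed as `lim_t H(N X_t)/t`. -/
def quotEntropy (μ : PMF G) (N : Subgroup G) : ℝ :=
  limUnder atTop fun t : ℕ => cosetEntropy N (iterConv μ t) / t

/-- Right multiplication by `g` on the space of right cosets: `Kx ↦ Kxg`. -/
def cosetMul (K : Subgroup G) (α : RightCoset K) (g : G) : RightCoset K :=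
  Quotient.liftOn α (fun x => rcMk K (x * g)) (by
    intro a b h
    have h' : b * a⁻¹ ∈ K := QuotientGroup.rightRel_apply.mp h
    apply Quotient.sound
    show QuotientGroup.rightRel K (a * g) (b * g)
    rw [QuotientGroup.rightRel_apply]
    have e : b * g * (a * g)⁻¹ = b * a⁻¹ := by group
    rw [e]; exact h')

/-- The graph distance in the Schreier graph of `K` (w.r.t. the generating set `S`)
from the coset `α` to the root coset `K`. -/
def cosetDist (S : Set G) (K : Subgroup G) (α : RightCoset K) : ℕ :=
  sInf {n | ∃ l : List G, l.length = n ∧ (∀ a ∈ l, a ∈ S) ∧ rcMk K l.prod = α}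

/-- The ball of radius `ρ` about the root in the Schreier graph of `K`. -/
def schreierBall (S : Set G) (K : Subgroup G) (ρ : ℕ) : Set (RightCoset K) :=
  {β | cosetDist S K β ≤ ρ}

open scoped Classical in
/-- The Green function `g_K^{m+}(α, B) = ∑_{t ≥ m} P[α X_t ∈ B]`. -/
def green (μ : PMF G) (K : Subgroup G) (m : ℕ) (α : RightCoset K)
    (B : Set (RightCoset K)) : ℝ≥0∞ :=
  ∑' (t : ℕ) (x : G), if cosetMul K α x ∈ B then iterConv μ (m + t) x else 0

/-- A subgroup `K` is `μ`-transient if the expected number of returns of the induced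
walk on `K\G` to the root is finite, i.e. `∑_t μ^{*t}(K) < ∞`. -/
def IsTransient (μ : PMF G) (K : Subgroup G) : Prop :=
  (∑' (t : ℕ) (x : ↥K), iterConv μ t ↑x) < ⊤

/-- The standard symmetric free generating set of the free group `F_d`. -/
def genSet (d : ℕ) : Set (FreeGroup (Fin d)) :=
  {x | ∃ i : Fin d, x = FreeGroup.of i ∨ x = (FreeGroup.of i)⁻¹}

/-- Word length in the free group. -/
def flen {d : ℕ} (x : FreeGroup (Fin d)) : ℕ := wordLength (genSet d) x

/-- `rad(g)`: the largest `k` such that the reduced word `s_1 ⋯ s_n` of `g` satisfies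
`s_1 ⋯ s_k = (s_{n-k+1} ⋯ s_n)⁻¹`. -/
def freeRad {d : ℕ} (g : FreeGroup (Fin d)) : ℕ :=
  sSup {k : ℕ | k ≤ g.toWord.length ∧
    g.toWord.take k = FreeGroup.invRev (g.toWord.drop (g.toWord.length - k))}

/-- `rad(K) ≥ r`, i.e. every nontrivial element of `K` has `rad` at least `r`. -/
def RadGE {d : ℕ} (K : Subgroup (FreeGroup (Fin d))) (r : ℕ) : Prop :=
  ∀ g ∈ K, g ≠ 1 → r ≤ freeRad g

/-- `pref_r(Kg)`: the `r`-prefix of a vertex of the Schreier graph of `K ≤ F_d`.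
If `|Kg| ≤ r` it is the unique `f` with `|f| = |Kg|` and `Kf = Kg`; if `|Kg| > r` it is
the unique `f` with `|f| = r` such that every path from `Kg` to the root `K` in the
Schreier graph passes through `Kf`.  (Existence and uniqueness hold whenever
`rad(K) ≥ r`.) -/
def prefCoset {d : ℕ} (K : Subgroup (FreeGroup (Fin d))) (r : ℕ)
    (α : RightCoset K) : FreeGroup (Fin d) :=
  if cosetDist (genSet d) K α ≤ r then
    Classical.epsilon fun f : FreeGroup (Fin d) =>
      flen f = cosetDist (genSet d) K α ∧ rcMk K f = α
  else
    Classical.epsilon fun f : FreeGroup (Fin d) =>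
      flen f = r ∧
      ∀ (m : ℕ) (c : ℕ → RightCoset K), c 0 = α → c m = rcMk K 1 →
        (∀ i < m, ∃ s ∈ genSet d, c (i + 1) = cosetMul K (c i) s) →
        ∃ i ≤ m, c i = rcMk K f

/-- The length-`r` prefix of the reduced word of an element of the free group
(the element itself if `|x| ≤ r`). -/
def prefWord {d : ℕ} (r : ℕ) (x : FreeGroup (Fin d)) : FreeGroup (Fin d) :=
  FreeGroup.mk (x.toWord.take r)

/-- The ball of radius `r` in `G` w.r.t. the generating set `S`. -/
def ball (S : Set G) (r : ℕ) : Set G := {x : G | wordLength S x ≤ r}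

section WordMetric

variable {S : Set G}

lemma wordLength_le_length {l : List G} (hl : ∀ a ∈ l, a ∈ S) :
    wordLength S l.prod ≤ l.length := by
  unfold wordLength
  exact Nat.sInf_le ⟨l, rfl, hl, rfl⟩

lemma exists_list_prod_eq (hS : Subgroup.closure S = ⊤) (hSinv : ∀ s ∈ S, s⁻¹ ∈ S)
    (x : G) : ∃ l : List G, (∀ a ∈ l, a ∈ S) ∧ l.prod = x := by
  have hx : x ∈ (Subgroup.closure S).toSubmonoid := by simp [hS]
  rw [Subgroup.closure_toSubmonoid] at hx
  obtain ⟨l, hl, rfl⟩ := Submonoid.exists_list_of_mem_closure hx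
  refine ⟨l, fun a ha => ?_, rfl⟩
  rcases hl a ha with h | h
  exacts [h, inv_inv a ▸ hSinv _ h]

lemma exists_list_length_eq_wordLength (hS : Subgroup.closure S = ⊤)
    (hSinv : ∀ s ∈ S, s⁻¹ ∈ S) (x : G) :
    ∃ l : List G, l.length = wordLength S x ∧ (∀ a ∈ l, a ∈ S) ∧ l.prod = x := by
  obtain ⟨l, hl, hx⟩ := exists_list_prod_eq hS hSinv x
  exact Nat.sInf_mem
    (s := {n | ∃ l : List G, l.length = n ∧ (∀ a ∈ l, a ∈ S) ∧ l.prod = x})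
    ⟨l.length, l, rfl, hl, hx⟩

lemma wordLength_one : wordLength S 1 = 0 :=
  Nat.le_zero.mp (wordLength_le_length (l := []) (by simp))

lemma wordLength_pos (hS : Subgroup.closure S = ⊤) (hSinv : ∀ s ∈ S, s⁻¹ ∈ S)
    {x : G} (hx : x ≠ 1) : 0 < wordLength S x := by
  obtain ⟨l, hlen, -, rfl⟩ := exists_list_length_eq_wordLength hS hSinv x
  rw [← hlen, List.length_pos_iff]
  rintro rfl
  exact hx List.prod_nil

lemma wordLength_inv_le (hS : Subgroup.closure S = ⊤) (hSinv : ∀ s ∈ S, s⁻¹ ∈ S)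
    (x : G) : wordLength S x⁻¹ ≤ wordLength S x := by
  obtain ⟨l, hlen, hl, rfl⟩ := exists_list_length_eq_wordLength hS hSinv x
  rw [← hlen, List.prod_inv_reverse]
  refine (wordLength_le_length ?_).trans_eq (by simp)
  simpa using fun a ha => inv_inv a ▸ hSinv _ (hl _ ha)

lemma wordLength_inv (hS : Subgroup.closure S = ⊤) (hSinv : ∀ s ∈ S, s⁻¹ ∈ S)
    (x : G) : wordLength S x⁻¹ = wordLength S x :=
  le_antisymm (wordLength_inv_le hS hSinv x) (by
    simpa using wordLength_inv_le hS hSinv x⁻¹)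

lemma ball_finite (hS : Subgroup.closure S = ⊤) (hSinv : ∀ s ∈ S, s⁻¹ ∈ S)
    (hfin : S.Finite) (r : ℕ) : (ball S r).Finite := by
  have : Finite S := hfin.to_subtype
  refine ((List.finite_length_le S r).image fun l => (l.map Subtype.val).prod).subset ?_
  intro x hx
  obtain ⟨l, hlen, hl, rfl⟩ := exists_list_length_eq_wordLength hS hSinv x
  refine ⟨l.attach.map fun a => ⟨a.1, hl a.1 a.2⟩, ?_, ?_⟩
  · show List.length _ ≤ r
    rw [List.length_map, List.length_attach, hlen]
    exact hx
  · simp [List.map_map, Function.comp_def]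

lemma one_le_ncard_ball (hS : Subgroup.closure S = ⊤) (hSinv : ∀ s ∈ S, s⁻¹ ∈ S)
    (hfin : S.Finite) (r : ℕ) : 1 ≤ (ball S r).ncard :=
  (Set.ncard_pos (ball_finite hS hSinv hfin r)).mpr
    ⟨1, show wordLength S 1 ≤ r by simp [wordLength_one]⟩

end WordMetric

section Schreier

variable {S : Set G} {K : Subgroup G}

lemma cosetMul_mk (a b : G) : cosetMul K (rcMk K a) b = rcMk K (a * b) := rfl

lemma cosetMul_one (α : RightCoset K) : cosetMul K α 1 = α := by
  induction α using Quotient.ind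
  exact congrArg (rcMk K) (mul_one _)

lemma cosetMul_mul (α : RightCoset K) (a b : G) :
    cosetMul K α (a * b) = cosetMul K (cosetMul K α a) b := by
  induction α using Quotient.ind
  exact congrArg (rcMk K) (mul_assoc _ _ _).symm

lemma cosetDist_le_length {α : RightCoset K} {l : List G} (hl : ∀ a ∈ l, a ∈ S)
    (hα : rcMk K l.prod = α) : cosetDist S K α ≤ l.length := by
  unfold cosetDist
  exact Nat.sInf_le ⟨l, rfl, hl, hα⟩

lemma exists_list_length_eq_cosetDist (hS : Subgroup.closure S = ⊤)
    (hSinv : ∀ s ∈ S, s⁻¹ ∈ S) (α : RightCoset K) :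
    ∃ l : List G,
      l.length = cosetDist S K α ∧ (∀ a ∈ l, a ∈ S) ∧ rcMk K l.prod = α := by
  obtain ⟨x, rfl⟩ := Quotient.exists_rep α
  obtain ⟨l, hl, hx⟩ := exists_list_prod_eq hS hSinv x
  exact Nat.sInf_mem
    (s := {n | ∃ l : List G, l.length = n ∧ (∀ a ∈ l, a ∈ S) ∧ rcMk K l.prod = ⟦x⟧})
    ⟨l.length, l, rfl, hl, congrArg (rcMk K) hx⟩

lemma cosetDist_mk_le_wordLength (hS : Subgroup.closure S = ⊤)
    (hSinv : ∀ s ∈ S, s⁻¹ ∈ S) (x : G) : cosetDist S K (rcMk K x) ≤ wordLength S x := by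
  obtain ⟨l, hlen, hl, rfl⟩ := exists_list_length_eq_wordLength hS hSinv x
  exact hlen ▸ cosetDist_le_length hl rfl

lemma cosetDist_mul_le (hS : Subgroup.closure S = ⊤) (hSinv : ∀ s ∈ S, s⁻¹ ∈ S)
    (x g : G) :
    cosetDist S K (rcMk K (x * g)) ≤ cosetDist S K (rcMk K x) + wordLength S g := by
  obtain ⟨l, hlen, hl, hx⟩ := exists_list_length_eq_cosetDist hS hSinv (rcMk K x)
  obtain ⟨l', hlen', hl', rfl⟩ := exists_list_length_eq_wordLength hS hSinv g
  rw [← hlen, ← hlen', ← List.length_append]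
  refine cosetDist_le_length (fun a ha => (List.mem_append.mp ha).elim (hl a) (hl' a)) ?_
  rw [List.prod_append, ← cosetMul_mk, hx, cosetMul_mk]

lemma cosetDist_le_mul_add (hS : Subgroup.closure S = ⊤) (hSinv : ∀ s ∈ S, s⁻¹ ∈ S)
    (x g : G) :
    cosetDist S K (rcMk K x) ≤ cosetDist S K (rcMk K (x * g)) + wordLength S g := by
  simpa [wordLength_inv hS hSinv] using cosetDist_mul_le hS hSinv (x * g) g⁻¹

end Schreier

/-- The condition in the second branch of `prefCoset`, with `β = Kf`. -/
def SeparatesFromRoot (S : Set G) (K : Subgroup G) (α β : RightCoset K) : Prop :=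
  ∀ (m : ℕ) (c : ℕ → RightCoset K), c 0 = α → c m = rcMk K 1 →
    (∀ i < m, ∃ s ∈ S, c (i + 1) = cosetMul K (c i) s) → ∃ i ≤ m, c i = β

section Separation

variable {S : Set G} {K : Subgroup G} {α β : RightCoset K}

lemma SeparatesFromRoot.cosetMul_of_ne {s : G} (hs : s ∈ S) (hne : α ≠ β)
    (h : SeparatesFromRoot S K α β) : SeparatesFromRoot S K (cosetMul K α s) β := by
  intro m c hc0 hcm hstep
  obtain ⟨i, hi, hci⟩ := h (m + 1) (fun | 0 => α | i + 1 => c i) rfl hcm (by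
    rintro (_ | i) hi
    · exact ⟨s, hs, hc0⟩
    · exact hstep i (by omega))
  cases i with
  | zero => exact absurd hci hne
  | succ i => exact ⟨i, by omega, hci⟩

lemma SeparatesFromRoot.cosetMul_prod {w : List G} (hw : ∀ a ∈ w, a ∈ S)
    (havoid : ∀ j < w.length, cosetMul K α (w.take j).prod ≠ β)
    (h : SeparatesFromRoot S K α β) : SeparatesFromRoot S K (cosetMul K α w.prod) β := by
  induction w generalizing α with
  | nil => simpa [cosetMul_one] using h
  | cons s w ih =>
    rw [List.prod_cons, cosetMul_mul]
    refine ih (fun a ha => hw a (List.mem_cons_of_mem s ha)) (fun j hj => ?_)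
      (h.cosetMul_of_ne (hw s List.mem_cons_self) ?_)
    · simpa [cosetMul_mul] using havoid (j + 1) (by simpa using hj)
    · simpa [cosetMul_one] using havoid 0 (by simp)

lemma separatesFromRoot_mk_iff_mk_mul (hS : Subgroup.closure S = ⊤)
    (hSinv : ∀ s ∈ S, s⁻¹ ∈ S) {x u : G}
    (h : cosetDist S K β + wordLength S u < cosetDist S K (rcMk K x)) :
    SeparatesFromRoot S K (rcMk K x) β ↔ SeparatesFromRoot S K (rcMk K (x * u)) β := by
  have hne {γ : RightCoset K} (hγ : cosetDist S K β < cosetDist S K γ) : γ ≠ β :=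
    fun hγβ => (hγβ ▸ hγ).false
  constructor
  · intro hx
    obtain ⟨w, hlen, hw, rfl⟩ := exists_list_length_eq_wordLength hS hSinv u
    refine hx.cosetMul_prod hw fun j hj => hne ?_
    have h₁ := cosetDist_le_mul_add (K := K) hS hSinv x (w.take j).prod
    have h₂ := wordLength_le_length (l := w.take j) fun a ha => hw a (List.mem_of_mem_take ha)
    rw [List.length_take] at h₂
    rw [cosetMul_mk]
    omega
  · intro hxu
    obtain ⟨w, hlen, hw, hwu⟩ := exists_list_length_eq_wordLength hS hSinv u⁻¹
    rw [wordLength_inv hS hSinv] at hlen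
    have hx := hxu.cosetMul_prod hw fun j hj => hne ?_
    · rwa [hwu, cosetMul_mk, mul_inv_cancel_right] at hx
    have hsplit : x * u * (w.take j).prod * (w.drop j).prod = x := by
      rw [mul_assoc, ← List.prod_append, List.take_append_drop, hwu, mul_inv_cancel_right]
    have h₁ := cosetDist_mul_le (K := K) hS hSinv (x * u * (w.take j).prod) (w.drop j).prod
    have h₂ := wordLength_le_length (l := w.drop j) fun a ha => hw a (List.mem_of_mem_drop ha)
    rw [List.length_drop] at h₂
    rw [hsplit] at h₁
    rw [cosetMul_mk]
    omega

end Separation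

section FreeGroup

variable {d : ℕ}

lemma closure_genSet (d : ℕ) : Subgroup.closure (genSet d) = ⊤ :=
  top_le_iff.mp <| (FreeGroup.closure_range_of _).ge.trans <|
    Subgroup.closure_mono <| by rintro _ ⟨i, rfl⟩; exact ⟨i, Or.inl rfl⟩

lemma inv_mem_genSet : ∀ a ∈ genSet d, a⁻¹ ∈ genSet d := by
  rintro a ⟨i, rfl | rfl⟩
  exacts [⟨i, Or.inr rfl⟩, ⟨i, Or.inl (inv_inv _)⟩]

lemma genSet_finite (d : ℕ) : (genSet d).Finite :=
  ((Set.finite_range FreeGroup.of).union (Set.finite_range fun i => (FreeGroup.of i)⁻¹)).subset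
    (by rintro a ⟨i, rfl | rfl⟩ <;> simp)

variable (K : Subgroup (FreeGroup (Fin d))) (r : ℕ)

/-- Both branches of `prefCoset` are `Classical.epsilon` of a predicate; we show the two
predicates coincide, which needs neither existence nor uniqueness of the prefix. -/
lemma prefCoset_mk_mul_eq {x u : FreeGroup (Fin d)}
    (h : r + flen u < cosetDist (genSet d) K (rcMk K x)) :
    prefCoset K r (rcMk K x) = prefCoset K r (rcMk K (x * u)) := by
  have hxu := cosetDist_le_mul_add (K := K) (closure_genSet d) inv_mem_genSet x u
  unfold flen at h
  rw [prefCoset, prefCoset, if_neg (by omega), if_neg (by omega)]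
  refine congrArg _ (funext fun f => propext (and_congr_right fun hf =>
    separatesFromRoot_mk_iff_mk_mul (closure_genSet d) inv_mem_genSet ?_))
  have := cosetDist_mk_le_wordLength (K := K) (closure_genSet d) inv_mem_genSet f
  unfold flen at hf
  omega

lemma cosetDist_le_of_prefCoset_ne {x u : FreeGroup (Fin d)}
    (h : prefCoset K r (rcMk K x) ≠ prefCoset K r (rcMk K (x * u))) :
    cosetDist (genSet d) K (rcMk K x) ≤ r + flen u :=
  not_lt.mp (mt (prefCoset_mk_mul_eq K r) h)

open scoped Classical in
lemma mul_ite_prefCoset_ne_le (p q : ℝ≥0∞) (x u : FreeGroup (Fin d)) :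
    p * q * (if prefCoset K r (rcMk K x) ≠ prefCoset K r (rcMk K (x * u)) then 1 else 0) ≤
      q * flen u *
        (if cosetMul K (rcMk K 1) x ∈ schreierBall (genSet d) K (r + flen u) then p else 0) := by
  split_ifs with hne hball
  · have hu : u ≠ 1 := by rintro rfl; exact hne (by rw [mul_one])
    have : 1 ≤ flen u := wordLength_pos (closure_genSet d) inv_mem_genSet hu
    calc p * q * 1 = q * 1 * p := by ring
      _ ≤ q * flen u * p := by gcongr; exact_mod_cast this
  · exact absurd (by rw [cosetMul_mk, one_mul]; exact cosetDist_le_of_prefCoset_ne K r hne) hball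
  all_goals simp

end FreeGroup

open scoped Classical in
theorem prefix_change_bound_general (d : ℕ) (K : Subgroup (FreeGroup (Fin d)))
    (μ : PMF (FreeGroup (Fin d))) (r : ℕ) (m : ℕ) :
    (∑' (t : ℕ) (x : FreeGroup (Fin d)) (u : FreeGroup (Fin d)),
        (iterConv μ (m + t)) x * μ u *
          (if prefCoset K r (rcMk K x) ≠ prefCoset K r (rcMk K (x * u))
            then 1 else 0)) ≤
      ((ball (genSet d) r).ncard : ℝ≥0∞) *
        ∑' u : FreeGroup (Fin d), μ u * (flen u : ℝ≥0∞) *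
          green μ K m (rcMk K 1) (schreierBall (genSet d) K (r + flen u)) := by
  calc _ ≤ ∑' (t : ℕ) (x : FreeGroup (Fin d)) (u : FreeGroup (Fin d)), μ u * flen u *
          (if cosetMul K (rcMk K 1) x ∈ schreierBall (genSet d) K (r + flen u)
            then iterConv μ (m + t) x else 0) :=
        ENNReal.tsum_le_tsum fun t => ENNReal.tsum_le_tsum fun x =>
          ENNReal.tsum_le_tsum fun u => mul_ite_prefCoset_ne_le K r _ _ x u
    _ = ∑' u : FreeGroup (Fin d), μ u * (flen u : ℝ≥0∞) *
          green μ K m (rcMk K 1) (schreierBall (genSet d) K (r + flen u)) := by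
        simp_rw [green, ← ENNReal.tsum_mul_left]
        exact (tsum_congr fun t => ENNReal.tsum_comm).trans ENNReal.tsum_comm
    _ ≤ _ := le_mul_of_one_le_left' <| by
        exact_mod_cast one_le_ncard_ball (closure_genSet d) inv_mem_genSet (genSet_finite d) r

open scoped Classical in
/-- **Corollary 4.2.** Let `K ≤ F_d` with `rad(K) ≥ n`, and let `Z_t = K X_t` be the
induced walk on the Schreier graph of `K`.  Then for every `r ≤ n` and `m ≥ 0`,
`∑_{t ≥ m} P[pref_r(Z_t) ≠ pref_r(Z_{t+1})]
  ≤ |B_r| ⬝ E[ |X_1| ⬝ g_K^{m+}(K, B(K, r + |X_1|)) ]`. -/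
theorem prefix_change_bound (d n : ℕ) (hd : 2 ≤ d)
    (K : Subgroup (FreeGroup (Fin d))) (hrad : RadGE K n)
    (μ : PMF (FreeGroup (Fin d))) (hsym : IsSymmetric μ) (hadapted : IsAdapted μ)
    (hmom : FiniteMoment (genSet d) μ 1)
    (r : ℕ) (hr : r ≤ n) (m : ℕ) :
    (∑' (t : ℕ) (x : FreeGroup (Fin d)) (u : FreeGroup (Fin d)),
        (iterConv μ (m + t)) x * μ u *
          (if prefCoset K r (rcMk K x) ≠ prefCoset K r (rcMk K (x * u))
            then 1 else 0)) ≤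
      ((ball (genSet d) r).ncard : ℝ≥0∞) *
        ∑' u : FreeGroup (Fin d), μ u * (flen u : ℝ≥0∞) *
          green μ K m (rcMk K 1) (schreierBall (genSet d) K (r + flen u)) :=
  prefix_change_bound_general d K μ r m
end Paper
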